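/- Let n ≥ 1, let M be a finite set, and let p(m|x) ≥ 0 for m ∈ M, x ∈ {0,1}^n satisfy ∑_{m∈M} p(m|x) = 1 for every x, together with the parity-obliviousness condition: for every s ∈ Par and every m ∈ M, ∑_{x : x·s=0} p(m|x) = ∑_{x : x·s=1} p(m|x). Then there exist a probability distribution p(i) on {0,1,…,n}, a probability distribution p_0(m) on M, and probability distributions p_{i,0}(m) and p_{i,1}(m) on M for each i ∈ {1,…,n}, such that for every m and x: p(m|x) = p(0)·p_0(m) + ∑_{i=1}^{n} p(i)·[p_{i,0}(m)·δ_{x_i,0} + p_{i,1}(m)·δ_{x_i,1}], where δ_{a,b} is the Kronecker delta. -/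

import Mathlib

/-- The inner product modulo 2 of two n-bit strings: x·s = ⊕ᵢ xᵢsᵢ. -/
def dotZ2 {n : ℕ} (x s : Fin n → ZMod 2) : ZMod 2 := ∑ i, x i * s i

/-- The Hamming weight of an n-bit string. -/
def hamWt {n : ℕ} (s : Fin n → ZMod 2) : ℕ :=
  (Finset.univ.filter (fun i => s i = 1)).card

noncomputable def chi (b : ZMod 2) : ℝ := if b = 0 then 1 else -1

lemma chi_zero : chi 0 = 1 := by simp [chi]

lemma chi_add (a b : ZMod 2) : chi (a + b) = chi a * chi b := by
  rcases (by decide : ∀ b : ZMod 2, b = 0 ∨ b = 1) a with rfl | rfl <;>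
    rcases (by decide : ∀ b : ZMod 2, b = 0 ∨ b = 1) b with rfl | rfl <;> norm_num [chi] <;> decide

lemma chi_cases (b : ZMod 2) : chi b = 1 ∨ chi b = -1 := by
  rcases (by decide : ∀ b : ZMod 2, b = 0 ∨ b = 1) b with rfl | rfl <;> norm_num [chi]

def eVec (n : ℕ) (i : Fin n) : Fin n → ZMod 2 := fun j => if j = i then 1 else 0

lemma dotZ2_eVec {n : ℕ} (x : Fin n → ZMod 2) (i : Fin n) :
    dotZ2 x (eVec n i) = x i := by
  simp [dotZ2, eVec, mul_ite, Finset.sum_ite_eq']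

lemma dotZ2_comm {n : ℕ} (x s : Fin n → ZMod 2) : dotZ2 x s = dotZ2 s x := by
  simp [dotZ2, mul_comm]

lemma dotZ2_add_left {n : ℕ} (x y s : Fin n → ZMod 2) :
    dotZ2 (x + y) s = dotZ2 x s + dotZ2 y s := by
  simp [dotZ2, add_mul, Finset.sum_add_distrib]

lemma eVec_ne_zero {n : ℕ} (i : Fin n) : eVec n i ≠ 0 := by
  intro h
  have := congrFun h i
  simp [eVec] at this

lemma hamWt_eVec {n : ℕ} (i : Fin n) : hamWt (eVec n i) = 1 := by
  unfold hamWt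
  have : (Finset.univ.filter (fun j => eVec n i j = 1)) = {i} := by
    ext j
    simp only [Finset.mem_filter, Finset.mem_univ, true_and, Finset.mem_singleton, eVec]
    constructor
    · intro h; by_contra hj; simp [hj] at h
    · intro h; simp [h]
  rw [this]; simp

lemma orth {n : ℕ} (s : Fin n → ZMod 2) :
    ∑ x : Fin n → ZMod 2, chi (dotZ2 x s) = if s = 0 then (2 ^ n : ℝ) else 0 := by
  by_cases hs : s = 0
  · subst hs
    simp [dotZ2, chi_zero, Finset.card_univ]
  · simp only [hs, if_false]
    obtain ⟨i, hi⟩ : ∃ i, s i ≠ 0 := by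
      by_contra h; push_neg at h; exact hs (funext h)
    have hi1 : s i = 1 := by
      have : ∀ a : ZMod 2, a ≠ 0 → a = 1 := by decide
      exact this _ hi
    have key : ∑ x : Fin n → ZMod 2, chi (dotZ2 x s)
        = ∑ x : Fin n → ZMod 2, chi (dotZ2 (x + eVec n i) s) :=
      (Fintype.sum_equiv (Equiv.addRight (eVec n i)) _ _ (fun x => rfl)).symm
    have neg : ∀ x : Fin n → ZMod 2, chi (dotZ2 (x + eVec n i) s) = - chi (dotZ2 x s) := by
      intro x
      rw [dotZ2_add_left, chi_add]
      have : dotZ2 (eVec n i) s = 1 := by rw [dotZ2_comm, dotZ2_eVec, hi1]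
      rw [this]
      simp [chi]
    have h2 : ∑ x : Fin n → ZMod 2, chi (dotZ2 x s)
        = - ∑ x : Fin n → ZMod 2, chi (dotZ2 x s) := by
      nth_rewrite 1 [key]
      simp only [neg]
      rw [Finset.sum_neg_distrib]
    linarith

lemma hamWt_zero {n : ℕ} : hamWt (0 : Fin n → ZMod 2) = 0 := by
  simp [hamWt]

lemma add_self_zero {n : ℕ} (v : Fin n → ZMod 2) : v + v = 0 := by
  funext j
  exact (by decide : ∀ a : ZMod 2, a + a = 0) _

lemma dotZ2_add_right {n : ℕ} (x s t : Fin n → ZMod 2) :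
    dotZ2 x (s + t) = dotZ2 x s + dotZ2 x t := by
  simp [dotZ2, mul_add, Finset.sum_add_distrib]

lemma dotZ2_zero_right {n : ℕ} (x : Fin n → ZMod 2) : dotZ2 x 0 = 0 := by
  simp [dotZ2]

lemma wt_classify {n : ℕ} (s : Fin n → ZMod 2) :
    s = 0 ∨ (∃ i, s = eVec n i) ∨ 2 ≤ hamWt s := by
  have hz : ∀ a : ZMod 2, a ≠ 1 → a = 0 := by decide
  rcases Nat.lt_or_ge (hamWt s) 2 with h | h
  · have h01 : hamWt s = 0 ∨ hamWt s = 1 := by omega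
    rcases h01 with h0 | h1
    · left
      funext j
      have hj : j ∉ Finset.univ.filter (fun i => s i = 1) := by
        rw [Finset.card_eq_zero.mp h0]; simp
      simp only [Finset.mem_filter, Finset.mem_univ, true_and] at hj
      exact hz _ hj
    · right; left
      obtain ⟨i, hi⟩ := Finset.card_eq_one.mp h1
      have hmem : ∀ j, s j = 1 ↔ j = i := by
        intro j
        constructor
        · intro hj
          have : j ∈ ({i} : Finset (Fin n)) := by
            rw [← hi]; simp [hj]
          simpa using this
        · rintro rfl
          have : j ∈ Finset.univ.filter (fun k => s k = 1) := by
            rw [hi]; simp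
          simpa using this
      refine ⟨i, funext fun j => ?_⟩
      by_cases hji : j = i
      · subst hji; simp [eVec, (hmem j).mpr rfl]
      · simp [eVec, hji, hz _ (fun hh => hji ((hmem j).mp hh))]
  · right; right; exact h

lemma eVec_add_ne_zero {n : ℕ} {i j : Fin n} (h : j ≠ i) :
    eVec n i + eVec n j ≠ 0 := by
  intro hc
  have := congrFun hc i
  simp [eVec, h, Ne.symm h] at this

lemma fourier_inversion {n : ℕ} (f : (Fin n → ZMod 2) → ℝ)
    (h2 : ∀ s : Fin n → ZMod 2, 2 ≤ hamWt s →
      ∑ x : Fin n → ZMod 2, chi (dotZ2 x s) * f x = 0)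
    (x : Fin n → ZMod 2) :
    f x = ((2:ℝ) ^ n)⁻¹ * (∑ y : Fin n → ZMod 2, f y)
        + ∑ i : Fin n, (((2:ℝ) ^ n)⁻¹ * ∑ y : Fin n → ZMod 2, chi (y i) * f y) * chi (x i) := by
  set N : ℝ := (2:ℝ) ^ n with hNdef
  have hN0 : N ≠ 0 := by positivity
  set c : ℝ := N⁻¹ * ∑ y : Fin n → ZMod 2, f y with hc
  set a : Fin n → ℝ := fun i => N⁻¹ * ∑ y : Fin n → ZMod 2, chi (y i) * f y with ha
  set g : (Fin n → ZMod 2) → ℝ := fun y => f y - c - ∑ i, a i * chi (y i) with hg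
  -- orthogonality in the second argument
  have orth' : ∀ z : Fin n → ZMod 2,
      ∑ s : Fin n → ZMod 2, chi (dotZ2 z s) = if z = 0 then N else 0 := by
    intro z
    calc ∑ s : Fin n → ZMod 2, chi (dotZ2 z s)
        = ∑ s : Fin n → ZMod 2, chi (dotZ2 s z) := by simp_rw [dotZ2_comm]
      _ = if z = 0 then N else 0 := orth z
  -- all Fourier coefficients of g vanish
  have hhat : ∀ s : Fin n → ZMod 2, ∑ y : Fin n → ZMod 2, chi (dotZ2 y s) * g y = 0 := by
    intro s
    have expand : ∑ y : Fin n → ZMod 2, chi (dotZ2 y s) * g y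
        = (∑ y : Fin n → ZMod 2, chi (dotZ2 y s) * f y)
          - c * (∑ y : Fin n → ZMod 2, chi (dotZ2 y s))
          - ∑ i : Fin n, a i * (∑ y : Fin n → ZMod 2, chi (dotZ2 y (s + eVec n i))) := by
      have point : ∀ y : Fin n → ZMod 2, chi (dotZ2 y s) * g y
          = chi (dotZ2 y s) * f y - c * chi (dotZ2 y s)
            - ∑ i : Fin n, a i * chi (dotZ2 y (s + eVec n i)) := by
        intro y
        simp only [hg]
        rw [mul_sub, mul_sub, Finset.mul_sum]
        congr 1
        · ring_nf
        · apply Finset.sum_congr rfl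
          intro i _
          rw [dotZ2_add_right, chi_add, dotZ2_eVec]
          ring
      rw [Finset.sum_congr rfl (fun y _ => point y), Finset.sum_sub_distrib,
        Finset.sum_sub_distrib, ← Finset.mul_sum, Finset.sum_comm]
      congr 1
      apply Finset.sum_congr rfl
      intro i _
      rw [← Finset.mul_sum]
    rcases wt_classify s with hs | ⟨i, rfl⟩ | hs
    · subst hs
      rw [expand]
      have h1 : ∀ y : Fin n → ZMod 2, chi (dotZ2 y (0 : Fin n → ZMod 2)) = 1 := by
        intro y; rw [dotZ2_zero_right, chi_zero]
      simp only [h1, one_mul, zero_add]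
      have h3 : ∀ i : Fin n, ∑ y : Fin n → ZMod 2, chi (dotZ2 y (eVec n i)) = 0 := by
        intro i; rw [orth]; simp [eVec_ne_zero i]
      simp only [h3, mul_zero, Finset.sum_const_zero, sub_zero]
      have : (∑ y : Fin n → ZMod 2, (1:ℝ)) = N := by
        simp [hNdef, Finset.card_univ]
      rw [this, hc]
      field_simp
      ring
    · rw [expand]
      have hT : ∑ y : Fin n → ZMod 2, chi (dotZ2 y (eVec n i)) * f y = N * a i := by
        simp_rw [dotZ2_eVec]
        rw [ha]
        field_simp
      have hO : ∑ y : Fin n → ZMod 2, chi (dotZ2 y (eVec n i)) = 0 := by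
        rw [orth]; simp [eVec_ne_zero i]
      have hlast : ∑ j : Fin n, a j * (∑ y : Fin n → ZMod 2, chi (dotZ2 y (eVec n i + eVec n j)))
          = a i * N := by
        rw [Finset.sum_eq_single i]
        · rw [add_self_zero, orth]
          simp
          exact Or.inl rfl
        · intro j _ hji
          rw [orth]
          simp [eVec_add_ne_zero hji]
        · simp
      rw [hT, hO, hlast]
      ring
    · rw [expand]
      have hs0 : s ≠ 0 := by
        intro hc0; rw [hc0, hamWt_zero] at hs; omega
      have hT := h2 s hs
      have hO : ∑ y : Fin n → ZMod 2, chi (dotZ2 y s) = 0 := by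
        rw [orth]; simp [hs0]
      have hlast : ∀ i : Fin n, ∑ y : Fin n → ZMod 2, chi (dotZ2 y (s + eVec n i)) = 0 := by
        intro i
        rw [orth]
        have : s + eVec n i ≠ 0 := by
          intro hc0
          have : s = eVec n i := by
            have := congrArg (· + eVec n i) hc0
            simpa [add_assoc, add_self_zero] using this
          rw [this, hamWt_eVec] at hs; omega
        simp [this]
      simp only [hT, hO, hlast, mul_zero, Finset.sum_const_zero, sub_zero, zero_sub, neg_zero]
  -- inversion
  have key : N * g x = ∑ s : Fin n → ZMod 2,
      chi (dotZ2 x s) * ∑ y : Fin n → ZMod 2, chi (dotZ2 y s) * g y := by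
    have step : ∀ s : Fin n → ZMod 2,
        chi (dotZ2 x s) * ∑ y : Fin n → ZMod 2, chi (dotZ2 y s) * g y
          = ∑ y : Fin n → ZMod 2, chi (dotZ2 (x + y) s) * g y := by
      intro s
      rw [Finset.mul_sum]
      apply Finset.sum_congr rfl
      intro y _
      rw [dotZ2_add_left, chi_add]
      ring
    simp_rw [step]
    rw [Finset.sum_comm]
    have inner : ∀ y : Fin n → ZMod 2,
        ∑ s : Fin n → ZMod 2, chi (dotZ2 (x + y) s) * g y = (if y = x then N else 0) * g y := by
      intro y
      rw [← Finset.sum_mul, orth']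
      congr 1
      have hiff : x + y = 0 ↔ y = x := by
        constructor
        · intro h
          have := congrArg (x + ·) h
          simpa [← add_assoc, add_self_zero] using this
        · rintro rfl; exact add_self_zero _
      simp [hiff]
    simp_rw [inner]
    simp only [ite_mul, zero_mul]
    rw [Finset.sum_ite_eq' Finset.univ x (fun y => N * g y)]
    simp
  simp only [hhat, mul_zero, Finset.sum_const_zero] at key
  have hgx : g x = 0 := by
    rcases mul_eq_zero.mp key with h | h
    · exact absurd h hN0
    · exact h
  have : f x = c + ∑ i, a i * chi (x i) := by
    have := hgx
    simp only [hg] at this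
    linarith
  simpa [hc, ha] using this

/-- Any parity-oblivious classical encoding p(m|x) decomposes as a mixture
p(m|x) = p(0)·p₀(m) + ∑ᵢ p(i)·[p_{i,0}(m)·δ_{xᵢ,0} + p_{i,1}(m)·δ_{xᵢ,1}]
of a message independent of x (weight `w₀` = p(0), distribution `q₀` = p₀) and, for
each bit i, an encoding of the single bit xᵢ (weight `w i` = p(i), distributions
`q i b` = p_{i,b}). -/
theorem parity_oblivious_encoding_decomposition
    (n : ℕ) (hn : 1 ≤ n) (M : Type) [Fintype M]
    (p : M → (Fin n → ZMod 2) → ℝ)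
    (hp_nonneg : ∀ m x, 0 ≤ p m x)
    (hp_sum : ∀ x, ∑ m : M, p m x = 1)
    (hPO : ∀ s : Fin n → ZMod 2, 2 ≤ hamWt s → ∀ m : M,
      ∑ x ∈ Finset.univ.filter (fun x => dotZ2 x s = 0), p m x
        = ∑ x ∈ Finset.univ.filter (fun x => dotZ2 x s = 1), p m x) :
    ∃ (w₀ : ℝ) (w : Fin n → ℝ) (q₀ : M → ℝ) (q : Fin n → ZMod 2 → M → ℝ),
      0 ≤ w₀ ∧ (∀ i, 0 ≤ w i) ∧ w₀ + ∑ i : Fin n, w i = 1 ∧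
      (∀ m, 0 ≤ q₀ m) ∧ (∑ m : M, q₀ m = 1) ∧
      (∀ i b m, 0 ≤ q i b m) ∧ (∀ i b, ∑ m : M, q i b m = 1) ∧
      (∀ (m : M) (x : Fin n → ZMod 2),
        p m x = w₀ * q₀ m
          + ∑ i : Fin n, w i *
              (q i 0 m * (if x i = 0 then 1 else 0)
                + q i 1 m * (if x i = 1 then 1 else 0))) := by
  
  have h01 : ∀ b : ZMod 2, b = 0 ∨ b = 1 := by decide
  set N : ℝ := (2:ℝ) ^ n with hNdef
  have hN0 : N ≠ 0 := by positivity
  set c : M → ℝ := fun m => N⁻¹ * ∑ x : Fin n → ZMod 2, p m x with hc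
  set a : Fin n → M → ℝ := fun i m => N⁻¹ * ∑ x : Fin n → ZMod 2, chi (x i) * p m x with ha
  -- the Fourier expansion of p
  have hinv : ∀ m x, p m x = c m + ∑ i : Fin n, a i m * chi (x i) := by
    intro m x
    have h2 : ∀ s : Fin n → ZMod 2, 2 ≤ hamWt s →
        ∑ y : Fin n → ZMod 2, chi (dotZ2 y s) * p m y = 0 := by
      intro s hs
      have hfilter : Finset.univ.filter (fun y : Fin n → ZMod 2 => ¬ dotZ2 y s = 0)
          = Finset.univ.filter (fun y => dotZ2 y s = 1) := by
        ext y
        simp only [Finset.mem_filter, Finset.mem_univ, true_and]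
        constructor
        · intro h
          rcases h01 (dotZ2 y s) with h0 | h1
          · exact absurd h0 h
          · exact h1
        · intro h
          rw [h]; decide
      have hsplit : ∑ y : Fin n → ZMod 2, chi (dotZ2 y s) * p m y
          = (∑ y ∈ Finset.univ.filter (fun y => dotZ2 y s = 0), p m y)
            - ∑ y ∈ Finset.univ.filter (fun y => dotZ2 y s = 1), p m y := by
        rw [← Finset.sum_filter_add_sum_filter_not Finset.univ (fun y => dotZ2 y s = 0)
          (fun y => chi (dotZ2 y s) * p m y), hfilter]
        congr 1
        · apply Finset.sum_congr rfl
          intro y hy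
          rw [Finset.mem_filter] at hy
          rw [hy.2, chi_zero, one_mul]
        · rw [← Finset.sum_neg_distrib]
          apply Finset.sum_congr rfl
          intro y hy
          rw [Finset.mem_filter] at hy
          rw [hy.2]
          simp [chi]
      rw [hsplit, hPO s hs m, sub_self]
    exact fourier_inversion (p m) h2 x
  -- column sums
  have hsum_c : ∑ m : M, c m = 1 := by
    rw [hc]
    rw [← Finset.mul_sum, Finset.sum_comm]
    have : ∀ x : Fin n → ZMod 2, ∑ m : M, p m x = 1 := hp_sum
    simp only [this]
    rw [Finset.sum_const, Finset.card_univ]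
    have hcard : (Fintype.card (Fin n → ZMod 2) : ℝ) = N := by
      simp [hNdef]
    rw [nsmul_eq_mul, hcard]
    field_simp
  have hsum_a : ∀ i, ∑ m : M, a i m = 0 := by
    intro i
    rw [ha]
    rw [← Finset.mul_sum, Finset.sum_comm]
    have : ∀ x : Fin n → ZMod 2, ∑ m : M, chi (x i) * p m x = chi (x i) := by
      intro x
      rw [← Finset.mul_sum, hp_sum, mul_one]
    simp only [this]
    have : ∑ x : Fin n → ZMod 2, chi (x i) = 0 := by
      have := orth (eVec n i)
      simp only [dotZ2_eVec] at this
      rw [this]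
      simp [eVec_ne_zero i]
    rw [this, mul_zero]
  -- the remainder is nonnegative
  set r : M → ℝ := fun m => c m - ∑ i : Fin n, |a i m| with hrdef
  have hr_nonneg : ∀ m, 0 ≤ r m := by
    intro m
    set x₀ : Fin n → ZMod 2 := fun i => if 0 ≤ a i m then 1 else 0 with hx₀
    have hterm : ∀ i : Fin n, a i m * chi (x₀ i) = -|a i m| := by
      intro i
      by_cases h : 0 ≤ a i m
      · simp only [hx₀, h, if_true]
        have : chi 1 = -1 := by norm_num [chi]
        rw [this, abs_of_nonneg h]; ring
      · simp only [hx₀, h, if_false]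
        rw [chi_zero, abs_of_neg (lt_of_not_ge h)]; ring
    have hp0 := hinv m x₀
    simp only [hterm] at hp0
    rw [Finset.sum_neg_distrib] at hp0
    have := hp_nonneg m x₀
    simp only [hrdef]
    linarith
  -- weights
  set w : Fin n → ℝ := fun i => ∑ m : M, |a i m| with hwdef
  set w₀ : ℝ := ∑ m : M, r m with hw₀def
  have hw_nonneg : ∀ i, 0 ≤ w i := fun i => Finset.sum_nonneg fun m _ => abs_nonneg _
  have hw₀_nonneg : 0 ≤ w₀ := Finset.sum_nonneg fun m _ => hr_nonneg m
  have htotal : w₀ + ∑ i : Fin n, w i = 1 := by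
    rw [hw₀def, hwdef]
    simp only [hrdef]
    rw [Finset.sum_sub_distrib, Finset.sum_comm, hsum_c]
    ring
  -- M is nonempty
  have hcardM : (Fintype.card M : ℝ) ≠ 0 := by
    intro hcc
    have hc0 : Fintype.card M = 0 := by exact_mod_cast hcc
    haveI := Fintype.card_eq_zero_iff.mp hc0
    simpa using hp_sum (fun _ => 0)
  -- distributions
  set q₀ : M → ℝ := fun m => if w₀ = 0 then (Fintype.card M : ℝ)⁻¹ else r m / w₀ with hq₀def
  set q : Fin n → ZMod 2 → M → ℝ :=
    fun i b m => if w i = 0 then (Fintype.card M : ℝ)⁻¹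
      else (|a i m| + a i m * chi b) / w i with hqdef
  have hqb_nonneg : ∀ (i : Fin n) (b : ZMod 2) (m : M), 0 ≤ |a i m| + a i m * chi b := by
    intro i b m
    rcases chi_cases b with h | h <;> rw [h]
    · have := neg_abs_le (a i m); linarith
    · have := le_abs_self (a i m); linarith
  refine ⟨w₀, w, q₀, q, hw₀_nonneg, hw_nonneg, htotal, ?_, ?_, ?_, ?_, ?_⟩
  · intro m
    rw [hq₀def]
    by_cases h : w₀ = 0
    · simp only [h, if_true]; positivity
    · simp only [h, if_false]
      exact div_nonneg (hr_nonneg m) hw₀_nonneg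
  · rw [hq₀def]
    by_cases h : w₀ = 0
    · simp only [h, if_true]
      rw [Finset.sum_const, Finset.card_univ, nsmul_eq_mul]
      field_simp
    · simp only [h, if_false]
      rw [← Finset.sum_div, ← hw₀def, div_self h]
  · intro i b m
    rw [hqdef]
    by_cases h : w i = 0
    · simp only [h, if_true]; positivity
    · simp only [h, if_false]
      exact div_nonneg (hqb_nonneg i b m) (hw_nonneg i)
  · intro i b
    rw [hqdef]
    by_cases h : w i = 0
    · simp only [h, if_true]
      rw [Finset.sum_const, Finset.card_univ, nsmul_eq_mul]
      field_simp
    · simp only [h, if_false]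
      rw [← Finset.sum_div]
      rw [Finset.sum_add_distrib, ← Finset.sum_mul, hsum_a i, zero_mul, add_zero]
      exact div_self h
  · -- the decomposition identity
    have hw0q : ∀ m, w₀ * q₀ m = r m := by
      intro m
      rw [hq₀def]
      by_cases h : w₀ = 0
      · simp only [h, if_true, zero_mul]
        have := (Finset.sum_eq_zero_iff_of_nonneg (fun m _ => hr_nonneg m)).mp
          (by rw [← hw₀def, h])
        exact (this m (Finset.mem_univ m)).symm
      · simp only [h, if_false]
        field_simp
    have hwq : ∀ (i : Fin n) (b : ZMod 2) (m : M),
        w i * q i b m = |a i m| + a i m * chi b := by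
      intro i b m
      rw [hqdef]
      by_cases h : w i = 0
      · simp only [h, if_true, zero_mul]
        have habs := (Finset.sum_eq_zero_iff_of_nonneg (fun m _ => abs_nonneg (a i m))).mp
          (show (∑ m : M, |a i m|) = 0 from h)
        have h0 : a i m = 0 := abs_eq_zero.mp (habs m (Finset.mem_univ m))
        rw [h0]; simp
      · simp only [h, if_false]
        field_simp
    intro m x
    have hterm : ∀ i : Fin n,
        w i * (q i 0 m * (if x i = 0 then 1 else 0) + q i 1 m * (if x i = 1 then 1 else 0))
          = |a i m| + a i m * chi (x i) := by
      intro i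
      rcases h01 (x i) with h | h <;> rw [h]
      · rw [if_pos rfl, if_neg (by decide : ¬ (0:ZMod 2) = 1)]
        rw [mul_one, mul_zero, add_zero]
        exact hwq i 0 m
      · rw [if_neg (by decide : ¬ (1:ZMod 2) = 0), if_pos rfl]
        rw [mul_zero, mul_one, zero_add]
        exact hwq i 1 m
    rw [hinv m x, hw0q m, Finset.sum_congr rfl (fun i _ => hterm i), Finset.sum_add_distrib]
    simp only [hrdef]
    ring
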